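/- arXiv:1206.1125 — 2 statements merged into one kernel-verified Lean document; each statement's English description precedes it below -/
import Mathlib

section
/- Let f : M → M' be an A-linear and N₀-equivariant map between two étale A[P₊]-modules. Then for each t ∈ L₊, f commutes with φₜ if and only if f commutes with the canonical left inverse ψₜ. -/
open scoped Classical

/-!
STATEMENT 8: Let `f : M → M'` be an `A`-linear, `N₀`-equivariant map between two
étale `A[P₊]`-modules.  Then for each `t ∈ L₊`, `f` commutes with `φₜ` if and only
if `f` commutes with the canonical left inverse `ψₜ`.
-/

variable {P : Type*} [Group P]

/-- The subgroup `N₀ ∩ tN₀t⁻¹` of `N₀`, i.e. those `u ∈ N₀` with `t⁻¹ u t ∈ N₀`. -/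
def conjSub (N₀ : Subgroup P) (t : P) : Subgroup ↥N₀ where
  carrier := {u | t⁻¹ * (u : P) * t ∈ N₀}
  one_mem' := by simpa using N₀.one_mem
  mul_mem' := by
    intro a b ha hb
    show t⁻¹ * ((a * b : ↥N₀) : P) * t ∈ N₀
    have h : t⁻¹ * ((a * b : ↥N₀) : P) * t = (t⁻¹ * (a : P) * t) * (t⁻¹ * (b : P) * t) := by
      push_cast; group
    rw [h]
    exact N₀.mul_mem ha hb
  inv_mem' := by
    intro a ha
    show t⁻¹ * ((a⁻¹ : ↥N₀) : P) * t ∈ N₀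
    have h : t⁻¹ * ((a⁻¹ : ↥N₀) : P) * t = (t⁻¹ * (a : P) * t)⁻¹ := by
      push_cast; group
    rw [h]
    exact N₀.inv_mem ha

/-- An `A[P₊]`-module `M` (with `N₀`-action `ρ`) is *étale* at `t` (acting by `φ`)
if `φ` is injective and `M = ⨁_{u ∈ J(N₀/tN₀t⁻¹)} u·φ(M)`. -/
def IsEtaleAt (A : Type*) [CommRing A] (N₀ : Subgroup P) (t : P)
    {M : Type*} [AddCommGroup M] [Module A M]
    (ρ : ↥N₀ → Module.End A M) (φ : Module.End A M) : Prop :=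
  Function.Injective φ ∧
    DirectSum.IsInternal fun c : ↥N₀ ⧸ conjSub N₀ t =>
      LinearMap.range (ρ (Quotient.out c) * φ)

/- On a generator `u • φ(m)` the canonical left inverse is explicit: `ψ(u • φ(m))` is
`(t⁻¹ u t) • m` if `u ∈ tN₀t⁻¹` and `0` otherwise. Hence `f(ψ(u • φ(m))) = ψ'(u • φ'(f m))` for
every `N₀`-equivariant `f`. If `f` commutes with `φ`, this says that `f ∘ ψ` and `ψ' ∘ f` agree on
generators, which span `M`. If `f` commutes with `ψ`, it says that `ψ'(v • d) = 0` for all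
`v ∈ N₀`, where `d = f(φ m) - φ'(f m)`; in an étale module this forces `d = 0`, since the
component of `d` in `u • φ'(M')` is `u • φ'(ψ'(u⁻¹ • d))`. -/

namespace IsEtaleAt

variable {A : Type*} [CommRing A] {N₀ : Subgroup P} {t : P}
  {M : Type*} [AddCommGroup M] [Module A M]

theorem linearMap_ext {ρ : ↥N₀ → Module.End A M} {φ : Module.End A M}
    (hetale : IsEtaleAt A N₀ t ρ φ) {N : Type*} [AddCommGroup N] [Module A N]
    {g₁ g₂ : M →ₗ[A] N} (h : ∀ (u : ↥N₀) (m : M), g₁ (ρ u (φ m)) = g₂ (ρ u (φ m))) :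
    g₁ = g₂ := by
  have hle : ⨆ c : ↥N₀ ⧸ conjSub N₀ t, LinearMap.range (ρ c.out * φ) ≤ LinearMap.eqLocus g₁ g₂ :=
    iSup_le fun c => by
      rintro _ ⟨m, rfl⟩
      exact h c.out m
  rw [hetale.2.submodule_iSup_eq_top] at hle
  exact LinearMap.ext fun x => hle Submodule.mem_top

end IsEtaleAt

section CanonicalLeftInverse

variable {A : Type*} [CommRing A] {N₀ : Subgroup P} {t : P}
  {M : Type*} [AddCommGroup M] [Module A M]

theorem psi_rho_phi_of_mem (hstab : ∀ u : P, u ∈ N₀ → t * u * t⁻¹ ∈ N₀)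
    {ρ : ↥N₀ →* Module.End A M} {φ ψ : Module.End A M}
    (hcompat : ∀ (u : ↥N₀) (m : M), φ (ρ u m) = ρ ⟨t * u * t⁻¹, hstab u u.2⟩ (φ m))
    (hψφ : ψ * φ = 1) {u : ↥N₀} (hu : u ∈ conjSub N₀ t) (m : M) :
    ψ (ρ u (φ m)) = ρ ⟨t⁻¹ * u * t, hu⟩ m := by
  have hconj : (⟨t * (t⁻¹ * u * t) * t⁻¹, hstab _ hu⟩ : ↥N₀) = u := by
    ext
    group
  have h := hcompat ⟨t⁻¹ * u * t, hu⟩ m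
  rw [hconj] at h
  rw [← h, ← Module.End.mul_apply, hψφ, Module.End.one_apply]

theorem psi_rho_out_inv_phi {ρ : ↥N₀ →* Module.End A M} {φ ψ : Module.End A M}
    (hψφ : ψ * φ = 1) (hvanish : ∀ u : ↥N₀, u ∉ conjSub N₀ t → ∀ m : M, ψ (ρ u (φ m)) = 0)
    (c d : ↥N₀ ⧸ conjSub N₀ t) (m : M) :
    ψ (ρ c.out⁻¹ (ρ d.out (φ m))) = if d = c then m else 0 := by
  rw [← Module.End.mul_apply (ρ _), ← map_mul]
  split_ifs with hdc
  · rw [hdc, inv_mul_cancel, map_one, Module.End.one_apply, ← Module.End.mul_apply, hψφ,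
      Module.End.one_apply]
  · refine hvanish _ (fun hmem => hdc ?_) m
    rw [← QuotientGroup.out_eq' c, ← QuotientGroup.out_eq' d]
    exact (QuotientGroup.eq.mpr hmem).symm

theorem eq_zero_of_forall_psi_rho_eq_zero {ρ : ↥N₀ →* Module.End A M} {φ ψ : Module.End A M}
    (hetale : IsEtaleAt A N₀ t (fun u => ρ u) φ) (hψφ : ψ * φ = 1)
    (hvanish : ∀ u : ↥N₀, u ∉ conjSub N₀ t → ∀ m : M, ψ (ρ u (φ m)) = 0)
    {x : M} (hx : ∀ v : ↥N₀, ψ (ρ v x) = 0) : x = 0 := by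
  have hmem : x ∈ ⨆ c : ↥N₀ ⧸ conjSub N₀ t, LinearMap.range (ρ c.out * φ) :=
    hetale.2.submodule_iSup_eq_top ▸ Submodule.mem_top
  obtain ⟨g, hg, rfl⟩ := (Submodule.mem_iSup_iff_exists_finsupp _ _).mp hmem
  choose m hm using hg
  simp only [Module.End.mul_apply] at hm
  have hcoeff : ∀ c ∈ g.support, ψ (ρ c.out⁻¹ (g.sum fun _ y => y)) = m c := by
    intro c hc
    simp only [Finsupp.sum, map_sum, ← hm, psi_rho_out_inv_phi hψφ hvanish, Finset.sum_ite_eq',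
      if_pos hc]
  refine Finset.sum_eq_zero fun c hc => ?_
  rw [← hm, ← hcoeff c hc, hx, map_zero, map_zero]

end CanonicalLeftInverse

theorem map_psi_rho_phi {A : Type*} [CommRing A] {N₀ : Subgroup P} {t : P}
    (hstab : ∀ u : P, u ∈ N₀ → t * u * t⁻¹ ∈ N₀)
    {M M' : Type*} [AddCommGroup M] [Module A M] [AddCommGroup M'] [Module A M']
    {ρ : ↥N₀ →* Module.End A M} {ρ' : ↥N₀ →* Module.End A M'}
    {φ ψ : Module.End A M} {φ' ψ' : Module.End A M'}
    (hcompat : ∀ (u : ↥N₀) (m : M), φ (ρ u m) = ρ ⟨t * u * t⁻¹, hstab u u.2⟩ (φ m))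
    (hcompat' : ∀ (u : ↥N₀) (m : M'), φ' (ρ' u m) = ρ' ⟨t * u * t⁻¹, hstab u u.2⟩ (φ' m))
    (hψφ : ψ * φ = 1) (hvanish : ∀ u : ↥N₀, u ∉ conjSub N₀ t → ∀ m : M, ψ (ρ u (φ m)) = 0)
    (hψφ' : ψ' * φ' = 1) (hvanish' : ∀ u : ↥N₀, u ∉ conjSub N₀ t → ∀ m : M', ψ' (ρ' u (φ' m)) = 0)
    {f : M →ₗ[A] M'} (hfN : ∀ (u : ↥N₀) (m : M), f (ρ u m) = ρ' u (f m)) (u : ↥N₀) (m : M) :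
    f (ψ (ρ u (φ m))) = ψ' (ρ' u (φ' (f m))) := by
  by_cases hu : u ∈ conjSub N₀ t
  · rw [psi_rho_phi_of_mem hstab hcompat hψφ hu, psi_rho_phi_of_mem hstab hcompat' hψφ' hu, hfN]
  · rw [hvanish u hu, hvanish' u hu, map_zero]

/-- **(Lemma 3.8 of the paper.)** An `N₀`-equivariant `A`-linear map between étale
`A[P₊]`-modules commutes with `φₜ` iff it commutes with `ψₜ`. -/
theorem equivariance_phi_iff_psi (A : Type*) [CommRing A] (N₀ : Subgroup P) (t : P)
    (hstab : ∀ u : P, u ∈ N₀ → t * u * t⁻¹ ∈ N₀)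
    {M M' : Type*} [AddCommGroup M] [Module A M] [AddCommGroup M'] [Module A M']
    (ρ : ↥N₀ →* Module.End A M) (ρ' : ↥N₀ →* Module.End A M')
    (φ ψ : Module.End A M) (φ' ψ' : Module.End A M')
    (hcompat : ∀ (u : ↥N₀) (m : M), φ (ρ u m) = ρ ⟨t * u * t⁻¹, hstab u u.2⟩ (φ m))
    (hcompat' : ∀ (u : ↥N₀) (m : M'), φ' (ρ' u m) = ρ' ⟨t * u * t⁻¹, hstab u u.2⟩ (φ' m))
    (hetale : IsEtaleAt A N₀ t (fun u => ρ u) φ)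
    (hetale' : IsEtaleAt A N₀ t (fun u => ρ' u) φ')
    (hψφ : ψ * φ = 1)
    (hvanish : ∀ u : ↥N₀, u ∉ conjSub N₀ t → ∀ m : M, ψ (ρ u (φ m)) = 0)
    (hψφ' : ψ' * φ' = 1)
    (hvanish' : ∀ u : ↥N₀, u ∉ conjSub N₀ t → ∀ m : M', ψ' (ρ' u (φ' m)) = 0)
    (f : M →ₗ[A] M')
    (hfN : ∀ u : ↥N₀, f ∘ₗ (ρ u : M →ₗ[A] M) = (ρ' u : M' →ₗ[A] M') ∘ₗ f) :
    f ∘ₗ (φ : M →ₗ[A] M) = (φ' : M' →ₗ[A] M') ∘ₗ f ↔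
      f ∘ₗ (ψ : M →ₗ[A] M) = (ψ' : M' →ₗ[A] M') ∘ₗ f := by
  have hfN' : ∀ (u : ↥N₀) (m : M), f (ρ u m) = ρ' u (f m) := fun u => LinearMap.congr_fun (hfN u)
  have hgen := map_psi_rho_phi hstab hcompat hcompat' hψφ hvanish hψφ' hvanish' hfN'
  constructor
  · intro hφ
    refine hetale.linearMap_ext fun u m => ?_
    have hφm : f (φ m) = φ' (f m) := LinearMap.congr_fun hφ m
    simp only [LinearMap.coe_comp, Function.comp_apply, hgen, hfN', hφm]
  · intro hψ
    ext m
    refine sub_eq_zero.mp (eq_zero_of_forall_psi_rho_eq_zero hetale' hψφ' hvanish' fun v => ?_)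
    have hψx : ∀ x, f (ψ x) = ψ' (f x) := LinearMap.congr_fun hψ
    rw [LinearMap.comp_apply, LinearMap.comp_apply, map_sub, map_sub, ← hfN', ← hψx, hgen, sub_self]
end

section
/- An A[P₊]-submodule M' of an étale A[P₊]-module M is itself étale if and only if M' is stable under the canonical left inverse ψ of the action φ of s. -/
/-!
If `M'` is `ψ`-stable, take `t ∈ L₊` and write `s ^ k = t' t` with `t' ∈ L₊`. Then
`ψ ^ k ∘ φ_{t'}` is a left inverse of `φ_t` that preserves `M'` and kills `u φ_t(M)` for
`u ∉ N₀ ∩ t N₀ t⁻¹`. Such an operator reads off the components of the decomposition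
`m = ∑ u φ_t(m_u)` as `m_u = ψ_t(u⁻¹ m)`, so for `m ∈ M'` every `m_u` lies in `M'`, and `M'` is
étale. Conversely, if `M' = ∑ u φ(M')`, then `ψ(u φ(m'))` is `0` or `(s⁻¹ u s) m'`, hence lies
in `M'`.
-/

open scoped Classical

variable {P : Type*} [Group P]

section Restrict

variable {A : Type*} [CommRing A] {M : Type*} [AddCommGroup M] [Module A M] {M' : Submodule A M}

theorem map_subtype_range_restrict (f : Module.End A M) (hf : ∀ x ∈ M', f x ∈ M') :
    (LinearMap.range (f.restrict hf)).map M'.subtype = M'.map f := by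
  rw [LinearMap.range_eq_map, ← Submodule.map_comp, LinearMap.subtype_comp_restrict,
    LinearMap.domRestrict, Submodule.map_comp, Submodule.map_subtype_top]

theorem iSupIndep_of_map_subtype_le {ι : Type*} {W : ι → Submodule A M}
    {W' : ι → Submodule A M'} (hW : iSupIndep W) (hle : ∀ i, (W' i).map M'.subtype ≤ W i) :
    iSupIndep W' := by
  rw [← iSupIndep_map_orderIso_iff M'.mapIic]
  exact iSupIndep.of_coe_Iic_comp (hW.mono hle)

theorem isEtaleAt_restrict_iff {N₀ : Subgroup P} {t : P} {ρ : N₀ → Module.End A M}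
    {φ : Module.End A M} (h : IsEtaleAt A N₀ t ρ φ) (hρ : ∀ u, ∀ x ∈ M', ρ u x ∈ M')
    (hφ : ∀ x ∈ M', φ x ∈ M') :
    IsEtaleAt A N₀ t (fun u => (ρ u).restrict (hρ u)) (φ.restrict hφ) ↔
      M' ≤ ⨆ c : N₀ ⧸ conjSub N₀ t, M'.map (ρ (Quotient.out c) * φ) := by
  have hmap : ∀ c : N₀ ⧸ conjSub N₀ t,
      (LinearMap.range ((ρ (Quotient.out c)).restrict (hρ _) * φ.restrict hφ)).map M'.subtype =
        M'.map (ρ (Quotient.out c) * φ) :=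
    fun c => map_subtype_range_restrict (ρ (Quotient.out c) * φ) fun x hx => hρ _ _ (hφ x hx)
  have hinj : Function.Injective (φ.restrict hφ) := fun x y hxy =>
    Subtype.ext (h.1 (congrArg Subtype.val hxy))
  have hind : iSupIndep fun c : N₀ ⧸ conjSub N₀ t =>
      LinearMap.range ((ρ (Quotient.out c)).restrict (hρ _) * φ.restrict hφ) :=
    iSupIndep_of_map_subtype_le h.2.submodule_iSupIndep fun c =>
      (hmap c).trans_le LinearMap.map_le_range
  rw [IsEtaleAt, DirectSum.isInternal_submodule_iff_iSupIndep_and_iSup_eq_top]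
  simp only [hinj, hind, true_and, eq_top_iff]
  rw [← Submodule.map_le_map_iff_of_injective M'.injective_subtype, Submodule.map_subtype_top,
    Submodule.map_iSup]
  simp only [hmap]

end Restrict

section CanonicalLeftInverse

variable {A : Type*} [CommRing A] {M : Type*} [AddCommGroup M] [Module A M] {N₀ : Subgroup P}

structure ConjEquivariant (ρ : N₀ →* Module.End A M) (t : P) (φ : Module.End A M) : Prop where
  conj_mem : ∀ u : N₀, t * u * t⁻¹ ∈ N₀
  apply_rho : ∀ (u : N₀) (m : M), φ (ρ u m) = ρ ⟨t * u * t⁻¹, conj_mem u⟩ (φ m)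

structure IsCanonicalLeftInverse (ρ : N₀ →* Module.End A M) (t : P) (φ ψ : Module.End A M) :
    Prop where
  mul_eq_one : ψ * φ = 1
  apply_rho_phi_eq_zero : ∀ u : N₀, u ∉ conjSub N₀ t → ∀ m, ψ (ρ u (φ m)) = 0

variable {ρ : N₀ →* Module.End A M} {t : P} {φ ψ : Module.End A M}

theorem mem_conjSub {u : N₀} : u ∈ conjSub N₀ t ↔ t⁻¹ * u * t ∈ N₀ :=
  Iff.rfl

theorem ConjEquivariant.rho_phi_eq (hφ : ConjEquivariant ρ t φ) {u : N₀} (hu : u ∈ conjSub N₀ t)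
    (m : M) : ρ u (φ m) = φ (ρ ⟨t⁻¹ * u * t, hu⟩ m) := by
  rw [hφ.apply_rho]
  congr
  simp only [mul_assoc, mul_inv_cancel, mul_one, mul_inv_cancel_left]

namespace IsCanonicalLeftInverse

theorem apply_phi (h : IsCanonicalLeftInverse ρ t φ ψ) (m : M) : ψ (φ m) = m := by
  rw [← Module.End.mul_apply, h.mul_eq_one, Module.End.one_apply]

theorem apply_rho_phi_of_mem (h : IsCanonicalLeftInverse ρ t φ ψ) (hφ : ConjEquivariant ρ t φ)
    {u : N₀} (hu : u ∈ conjSub N₀ t) (m : M) : ψ (ρ u (φ m)) = ρ ⟨t⁻¹ * u * t, hu⟩ m := by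
  rw [hφ.rho_phi_eq hu, h.apply_phi]

theorem mul {t₁ t₂ : P} {φ₁ φ₂ ψ₁ ψ₂ : Module.End A M} (h₁ : IsCanonicalLeftInverse ρ t₁ φ₁ ψ₁)
    (hφ₁ : ConjEquivariant ρ t₁ φ₁) (h₂ : IsCanonicalLeftInverse ρ t₂ φ₂ ψ₂) :
    IsCanonicalLeftInverse ρ (t₁ * t₂) (φ₁ * φ₂) (ψ₂ * ψ₁) where
  mul_eq_one := by
    rw [mul_assoc, ← mul_assoc ψ₁, h₁.mul_eq_one, one_mul, h₂.mul_eq_one]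
  apply_rho_phi_eq_zero u hu m := by
    simp only [Module.End.mul_apply]
    by_cases hu₁ : u ∈ conjSub N₀ t₁
    · rw [h₁.apply_rho_phi_of_mem hφ₁ hu₁]
      refine h₂.apply_rho_phi_eq_zero _ (fun hu₂ => hu ?_) m
      rw [mem_conjSub] at hu₂ ⊢
      convert hu₂ using 1
      group
    · rw [h₁.apply_rho_phi_eq_zero u hu₁, map_zero]

theorem pow (h : IsCanonicalLeftInverse ρ t φ ψ) (hφ : ConjEquivariant ρ t φ) :
    ∀ k : ℕ, IsCanonicalLeftInverse ρ (t ^ k) (φ ^ k) (ψ ^ k)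
  | 0 => by
    refine ⟨by simp, fun u hu => absurd ?_ hu⟩
    simp [conjSub]
  | k + 1 => by
    rw [pow_succ' t, pow_succ' φ, pow_succ ψ]
    exact h.mul hφ (h.pow hφ k)

theorem of_mul {t₁ t₂ : P} {φ₁ φ₂ : Module.End A M}
    (h : IsCanonicalLeftInverse ρ (t₁ * t₂) (φ₁ * φ₂) ψ) (hφ₁ : ConjEquivariant ρ t₁ φ₁) :
    IsCanonicalLeftInverse ρ t₂ φ₂ (ψ * φ₁) where
  mul_eq_one := by rw [mul_assoc, h.mul_eq_one]
  apply_rho_phi_eq_zero u hu m := by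
    rw [Module.End.mul_apply, hφ₁.apply_rho]
    refine h.apply_rho_phi_eq_zero _ (fun hw => hu ?_) m
    rw [mem_conjSub] at hw ⊢
    convert hw using 1
    group

theorem apply_rho_out_inv_rho_out_phi (h : IsCanonicalLeftInverse ρ t φ ψ)
    {c j : N₀ ⧸ conjSub N₀ t} (hjc : j ≠ c) (m : M) :
    ψ (ρ (Quotient.out c)⁻¹ (ρ (Quotient.out j) (φ m))) = 0 := by
  rw [← Module.End.mul_apply (ρ _), ← map_mul]
  refine h.apply_rho_phi_eq_zero _ (fun hcj => hjc ?_) m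
  simpa using (QuotientGroup.eq.mpr hcj).symm

theorem apply_rho_out_inv_sum (h : IsCanonicalLeftInverse ρ t φ ψ)
    {S : Finset (N₀ ⧸ conjSub N₀ t)} {c : N₀ ⧸ conjSub N₀ t} (hc : c ∈ S)
    (m : N₀ ⧸ conjSub N₀ t → M) :
    ψ (ρ (Quotient.out c)⁻¹ (∑ j ∈ S, ρ (Quotient.out j) (φ (m j)))) = m c := by
  rw [map_sum, map_sum, Finset.sum_eq_single_of_mem c hc
    fun j _ hjc => h.apply_rho_out_inv_rho_out_phi hjc (m j)]
  rw [← Module.End.mul_apply (ρ _), ← map_mul, inv_mul_cancel, map_one, Module.End.one_apply,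
    h.apply_phi]

theorem le_iSup_map (h : IsCanonicalLeftInverse ρ t φ ψ)
    (hspan : ⨆ c : N₀ ⧸ conjSub N₀ t, LinearMap.range (ρ (Quotient.out c) * φ) = ⊤)
    {M' : Submodule A M} (hρ : ∀ u, ∀ x ∈ M', ρ u x ∈ M') (hψ : ∀ x ∈ M', ψ x ∈ M') :
    M' ≤ ⨆ c : N₀ ⧸ conjSub N₀ t, M'.map (ρ (Quotient.out c) * φ) := by
  intro x hx
  have hxspan : x ∈ ⨆ c : N₀ ⧸ conjSub N₀ t, LinearMap.range (ρ (Quotient.out c) * φ) :=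
    hspan ▸ Submodule.mem_top
  obtain ⟨f, hf, hsum⟩ := (Submodule.mem_iSup_iff_exists_finsupp _ _).mp hxspan
  choose m hm using hf
  have hx_eq : x = ∑ c ∈ f.support, ρ (Quotient.out c) (φ (m c)) := by
    rw [← hsum, Finsupp.sum]
    exact Finset.sum_congr rfl fun c _ => (hm c).symm
  rw [hx_eq]
  refine Submodule.sum_mem _ fun c hc => Submodule.mem_iSup_of_mem c ⟨m c, ?_, rfl⟩
  rw [← h.apply_rho_out_inv_sum hc m, ← hx_eq]
  exact hψ _ (hρ _ _ hx)

theorem map_rho_phi_le_comap (h : IsCanonicalLeftInverse ρ t φ ψ) (hφ : ConjEquivariant ρ t φ)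
    {M' : Submodule A M} (hρ : ∀ u, ∀ x ∈ M', ρ u x ∈ M') (u : N₀) :
    M'.map (ρ u * φ) ≤ M'.comap ψ := by
  rintro _ ⟨m, hm, rfl⟩
  change ψ (ρ u (φ m)) ∈ M'
  by_cases hu : u ∈ conjSub N₀ t
  · exact h.apply_rho_phi_of_mem hφ hu m ▸ hρ _ m hm
  · exact h.apply_rho_phi_eq_zero u hu m ▸ M'.zero_mem

end IsCanonicalLeftInverse

end CanonicalLeftInverse

theorem submodule_etale_iff_psi_stable_general (A : Type*) [CommRing A]
    (N₀ : Subgroup P) (Lp : Submonoid P)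
    (hconj : ∀ t ∈ Lp, ∀ u ∈ N₀, t * u * t⁻¹ ∈ N₀)
    (s : P) (hsLp : s ∈ Lp)
    (hdom : ∀ t ∈ Lp, ∃ k : ℕ, s ^ k * t⁻¹ ∈ Lp)
    {M : Type*} [AddCommGroup M] [Module A M]
    (ρ : ↥N₀ →* Module.End A M) (Φ : ↥Lp →* Module.End A M)
    (hcompat : ∀ (t : ↥Lp) (u : ↥N₀) (m : M),
      Φ t (ρ u m) = ρ ⟨(t : P) * u * (t : P)⁻¹, hconj t t.2 u u.2⟩ (Φ t m))
    (hetale : ∀ t : ↥Lp, IsEtaleAt A N₀ (t : P) (fun u => ρ u) (Φ t))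
    (ψ : Module.End A M)
    (hψφ : ψ * Φ ⟨s, hsLp⟩ = 1)
    (hvanish : ∀ u : ↥N₀, u ∉ conjSub N₀ s → ∀ m : M, ψ (ρ u (Φ ⟨s, hsLp⟩ m)) = 0)
    (M' : Submodule A M)
    (hρst : ∀ u : ↥N₀, ∀ x ∈ M', ρ u x ∈ M')
    (hΦst : ∀ t : ↥Lp, ∀ x ∈ M', Φ t x ∈ M') :
    (∀ x ∈ M', ψ x ∈ M') ↔
      ∀ t : ↥Lp, IsEtaleAt A N₀ (t : P)
        (fun u : ↥N₀ => ((ρ u : M →ₗ[A] M).restrict (hρst u) : Module.End A ↥M'))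
        ((Φ t : M →ₗ[A] M).restrict (hΦst t)) := by
  have hequiv : ∀ t : Lp, ConjEquivariant ρ t (Φ t) := fun t => ⟨_, hcompat t⟩
  have hψ : IsCanonicalLeftInverse ρ s (Φ ⟨s, hsLp⟩) ψ := ⟨hψφ, hvanish⟩
  constructor
  · intro hψM' t
    obtain ⟨k, hk⟩ := hdom t t.2
    have ht : (⟨s ^ k * (t : P)⁻¹, hk⟩ : Lp) * t = ⟨s, hsLp⟩ ^ k := by ext; simp
    have hψt : IsCanonicalLeftInverse ρ t (Φ t) (ψ ^ k * Φ ⟨s ^ k * (t : P)⁻¹, hk⟩) := by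
      refine IsCanonicalLeftInverse.of_mul ?_ (hequiv _)
      rw [← map_mul, ht, map_pow, ← Submonoid.coe_mul, ht, SubmonoidClass.coe_pow]
      exact hψ.pow (hequiv ⟨s, hsLp⟩) k
    rw [isEtaleAt_restrict_iff (hetale t)]
    refine hψt.le_iSup_map (hetale t).2.submodule_iSup_eq_top hρst fun x hx => ?_
    exact Module.End.pow_apply_mem_of_forall_mem k hψM' _ (hΦst _ x hx)
  · intro hM'
    have hspan := (isEtaleAt_restrict_iff (hetale ⟨s, hsLp⟩) hρst (hΦst _)).mp (hM' _)
    exact fun x hx =>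
      hspan.trans (iSup_le fun _ => hψ.map_rho_phi_le_comap (hequiv ⟨s, hsLp⟩) hρst _) hx

/-- **(Cor. 3.20 of the paper.)**  An `A[P₊]`-submodule `M'` of an étale
`A[P₊]`-module `M` is étale (with the restricted actions) iff it is `ψ`-stable,
where `ψ` is the canonical left inverse of the action `φ` of `s`. -/
theorem submodule_etale_iff_psi_stable (A : Type*) [CommRing A]
    (N₀ : Subgroup P) (Lp : Submonoid P)
    (hconj : ∀ t ∈ Lp, ∀ u ∈ N₀, t * u * t⁻¹ ∈ N₀)
    (s : P) (hsLp : s ∈ Lp)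
    (hcentral : ∀ t ∈ Lp, Commute s t)
    (hdom : ∀ t ∈ Lp, ∃ k : ℕ, s ^ k * t⁻¹ ∈ Lp)
    {M : Type*} [AddCommGroup M] [Module A M]
    (ρ : ↥N₀ →* Module.End A M) (Φ : ↥Lp →* Module.End A M)
    (hcompat : ∀ (t : ↥Lp) (u : ↥N₀) (m : M),
      Φ t (ρ u m) = ρ ⟨(t : P) * u * (t : P)⁻¹, hconj t t.2 u u.2⟩ (Φ t m))
    (hetale : ∀ t : ↥Lp, IsEtaleAt A N₀ (t : P) (fun u => ρ u) (Φ t))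
    (ψ : Module.End A M)
    (hψφ : ψ * Φ ⟨s, hsLp⟩ = 1)
    (hvanish : ∀ u : ↥N₀, u ∉ conjSub N₀ s → ∀ m : M, ψ (ρ u (Φ ⟨s, hsLp⟩ m)) = 0)
    (M' : Submodule A M)
    (hρst : ∀ u : ↥N₀, ∀ x ∈ M', ρ u x ∈ M')
    (hΦst : ∀ t : ↥Lp, ∀ x ∈ M', Φ t x ∈ M') :
    (∀ x ∈ M', ψ x ∈ M') ↔
      ∀ t : ↥Lp, IsEtaleAt A N₀ (t : P)
        (fun u : ↥N₀ => ((ρ u : M →ₗ[A] M).restrict (hρst u) : Module.End A ↥M'))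
        ((Φ t : M →ₗ[A] M).restrict (hΦst t)) :=
  submodule_etale_iff_psi_stable_general A N₀ Lp hconj s hsLp hdom ρ Φ hcompat hetale ψ hψφ hvanish
    M' hρst hΦst
end
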